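/- arXiv:1304.7973 — 4 statements merged into one kernel-verified Lean document; each statement's English description precedes it below -/
import Mathlib

section
/- The Bingham normalising constant C(θ) satisfies the Euler–Darboux equations: for all 1 ≤ i < j ≤ p and all θ ∈ ℝ^p with θ_i ≠ θ_j, ∂²C/∂θ_i∂θ_j (θ) = (∂C/∂θ_i (θ) − ∂C/∂θ_j (θ)) / (2(θ_i − θ_j)). -/
open MeasureTheory

/-- The normalising constant of the Bingham distribution. -/
noncomputable def binghamC (p : ℕ) (θ : Fin p → ℝ) : ℝ :=
  ∫ x in {x : EuclideanSpace ℝ (Fin p) | ‖x‖ = 1},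
    Real.exp (∑ i, θ i * x i ^ 2) ∂ μH[(p : ℝ) - 1]

/-!
Differentiating under the integral sign (the unit sphere is compact and has finite
`(p - 1)`-dimensional Hausdorff measure) gives `∂_k C = ∫ x_k² e^{⟨θ, x²⟩}` and
`∂_i ∂_j C = ∫ x_i² x_j² e^{⟨θ, x²⟩}`. The Hausdorff measure on the sphere is invariant under
the rotations `R_φ` of the `(x_i, x_j)`-plane, so `φ ↦ ∫ f ∘ R_φ` is constant and its derivative
at `0`, the integral of the derivative of `f` along the rotation generator, vanishes. For
`f = x_i x_j e^{⟨θ, x²⟩}` this derivative is `(x_j² - x_i² + 2 (θ_i - θ_j) x_i² x_j²) e^{⟨θ, x²⟩}`,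
which is the Euler–Darboux equation multiplied by `2 (θ_i - θ_j)`.

The sphere has finite Hausdorff measure because it is covered by the radial projections of the
faces of the cube `[-1, 1]^p`, which are `C¹` images of compact subsets of `ℝ^(p-1)`.
-/

open Metric Real
open scoped ENNReal

theorem ContDiff.hausdorffMeasure_image_lt_top {F : Type*} [NormedAddCommGroup F]
    [NormedSpace ℝ F] [MeasurableSpace F] [BorelSpace F] {n : ℕ} {f : (Fin n → ℝ) → F}
    (hf : ContDiff ℝ 1 f) {s : Set (Fin n → ℝ)} (hs : IsCompact s) :
    μH[n] (f '' s) < ∞ := by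
  obtain ⟨K, hK⟩ := hf.locallyLipschitz.locallyLipschitzOn.exists_lipschitzOnWith_of_compact hs
  have hvol : (μH[n] : Measure (Fin n → ℝ)) = volume := by
    simpa using hausdorffMeasure_pi_real (ι := Fin n)
  calc μH[n] (f '' s) ≤ K ^ (n : ℝ) * μH[n] s := hK.hausdorffMeasure_image_le n.cast_nonneg
    _ < ∞ := ENNReal.mul_lt_top (by simp) (hvol ▸ hs.measure_lt_top)

/-- The radial projection of the face `{x_k = ε}` of the cube `[-1, 1]^(n+1)` onto the unit
sphere. -/
noncomputable def cubeFaceToSphere {n : ℕ} (k : Fin (n + 1)) (ε : ℝ) (y : Fin n → ℝ) :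
    EuclideanSpace ℝ (Fin (n + 1)) :=
  ‖WithLp.toLp 2 (Fin.insertNth (α := fun _ => ℝ) k ε y)‖⁻¹ •
    WithLp.toLp 2 (Fin.insertNth (α := fun _ => ℝ) k ε y)

theorem contDiff_insertNth {n : ℕ} (k : Fin (n + 1)) (ε : ℝ) :
    ContDiff ℝ ⊤ fun y : Fin n → ℝ => Fin.insertNth (α := fun _ => ℝ) k ε y :=
  contDiff_pi.2 fun m => by
    rcases k.eq_self_or_eq_succAbove m with rfl | ⟨m, rfl⟩
    · simpa using contDiff_const
    · simpa using contDiff_apply ℝ ℝ m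

theorem contDiff_cubeFaceToSphere {n : ℕ} (k : Fin (n + 1)) {ε : ℝ} (hε : ε ≠ 0) :
    ContDiff ℝ 1 (cubeFaceToSphere k ε) := by
  have hv := (PiLp.contDiff_toLp (p := 2)).comp (contDiff_insertNth k ε)
  have hne : ∀ y : Fin n → ℝ, WithLp.toLp 2 (Fin.insertNth (α := fun _ => ℝ) k ε y) ≠ 0 :=
    fun y h => by simpa [hε] using congrArg (· k) h
  exact (((hv.norm ℝ hne).inv fun y => norm_ne_zero_iff.2 (hne y)).smul hv).of_le le_top

theorem sphere_subset_iUnion_cubeFaceToSphere (n : ℕ) :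
    sphere (0 : EuclideanSpace ℝ (Fin (n + 1))) 1 ⊆
      ⋃ kε ∈ (Set.univ : Set (Fin (n + 1))) ×ˢ ({-1, 1} : Set ℝ),
        cubeFaceToSphere kε.1 kε.2 '' closedBall 0 1 := by
  intro x hx
  rw [mem_sphere_zero_iff_norm] at hx
  obtain ⟨k, hk⟩ := Finite.exists_max fun m => |x m|
  have ha : 0 < |x k| := by
    by_contra! h
    have : x = 0 := by ext m; simpa using (hk m).trans h
    simp [this] at hx
  have hx0 : x k ≠ 0 := abs_pos.1 ha
  simp only [Set.mem_iUnion, Set.mem_image, Set.mem_prod, Set.mem_univ, true_and]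
  refine ⟨(k, x k / |x k|), ?_, fun m => x (k.succAbove m) / |x k|, ?_, ?_⟩
  · rcases abs_cases (x k) with ⟨h, -⟩ | ⟨h, -⟩ <;> simp [h, hx0]
  · rw [mem_closedBall_zero_iff, pi_norm_le_iff_of_nonneg zero_le_one]
    intro m
    rw [norm_div, Real.norm_eq_abs, norm_abs_eq_norm, Real.norm_eq_abs, div_le_one ha]
    exact hk _
  · have hv : WithLp.toLp 2 (Fin.insertNth (α := fun _ => ℝ) k (x k / |x k|)
        fun m => x (k.succAbove m) / |x k|) = |x k|⁻¹ • x := by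
      ext m
      rcases k.eq_self_or_eq_succAbove m with rfl | ⟨m, rfl⟩ <;> simp [div_eq_inv_mul]
    rw [cubeFaceToSphere, hv, norm_smul, hx, norm_inv, norm_abs_eq_norm, mul_one, smul_smul,
      inv_inv, Real.norm_eq_abs, mul_inv_cancel₀ ha.ne', one_smul]

theorem hausdorffMeasure_sphere_lt_top (n : ℕ) :
    μH[n] (sphere (0 : EuclideanSpace ℝ (Fin (n + 1))) 1) < ∞ := by
  refine (measure_mono (sphere_subset_iUnion_cubeFaceToSphere n)).trans_lt ?_
  refine measure_biUnion_lt_top (Set.finite_univ.prod (Set.toFinite _)) fun kε hkε => ?_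
  have hε : kε.2 ≠ 0 := by rcases hkε.2 with h | h <;> simp_all
  exact (contDiff_cubeFaceToSphere kε.1 hε).hausdorffMeasure_image_lt_top
    (isCompact_closedBall 0 1)

section ParametricIntegral

variable {X : Type*} [TopologicalSpace X] [T2Space X] [MeasurableSpace X]
  [OpensMeasurableSpace X] {μ : Measure X} [IsFiniteMeasure μ] {K : Set X}

theorem Continuous.integrable_of_ae_mem_isCompact {E : Type*} [NormedAddCommGroup E]
    {f : X → E} (hf : Continuous f) (hK : IsCompact K) (hμK : ∀ᵐ x ∂μ, x ∈ K) :
    Integrable f μ := by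
  rw [← Measure.restrict_eq_self_of_ae_mem hμK]
  exact hf.continuousOn.integrableOn_compact hK

variable [SecondCountableTopology X] {F : Type*} [NormedAddCommGroup F] [NormedSpace ℝ F]

theorem hasFDerivAt_integral_mul_exp (hK : IsCompact K) (hμK : ∀ᵐ x ∂μ, x ∈ K) {c : X → ℝ}
    (hc : Continuous c) {L : X → StrongDual ℝ F} (hL : Continuous L) (θ₀ : F) :
    HasFDerivAt (fun θ => ∫ x, c x * exp (L x θ) ∂μ)
      (∫ x, (c x * exp (L x θ₀)) • L x ∂μ) θ₀ := by
  obtain ⟨Cc, hCc⟩ := hK.exists_bound_of_continuousOn hc.continuousOn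
  obtain ⟨CL, hCL⟩ := hK.exists_bound_of_continuousOn hL.continuousOn
  have hLθ : ∀ x ∈ K, ∀ θ ∈ ball θ₀ 1, L x θ ≤ CL * (‖θ₀‖ + 1) := by
    intro x hx θ hθ
    have hθ' : ‖θ‖ ≤ ‖θ₀‖ + 1 := norm_le_norm_add_const_of_dist_le (mem_ball.1 hθ).le
    refine (le_abs_self _).trans ?_
    calc |L x θ| ≤ ‖L x‖ * ‖θ‖ := (L x).le_opNorm θ
      _ ≤ CL * (‖θ₀‖ + 1) :=
        mul_le_mul (hCL x hx) hθ' (norm_nonneg _) ((norm_nonneg _).trans (hCL x hx))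
  have hF : ∀ θ, Continuous fun x => c x * exp (L x θ) := fun θ =>
    hc.mul (hL.clm_apply continuous_const).rexp
  refine hasFDerivAt_integral_of_dominated_of_fderiv_le (ball_mem_nhds θ₀ one_pos)
    (F' := fun θ x => (c x * exp (L x θ)) • L x)
    (bound := fun _ => Cc * exp (CL * (‖θ₀‖ + 1)) * CL)
    (.of_forall fun θ => (hF θ).aestronglyMeasurable)
    ((hF θ₀).integrable_of_ae_mem_isCompact hK hμK)
    ((hF θ₀).smul hL).aestronglyMeasurable ?_ (integrable_const _) ?_
  · filter_upwards [hμK] with x hx θ hθ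
    rw [norm_smul, norm_mul, Real.norm_of_nonneg (exp_pos _).le]
    have hc0 : 0 ≤ Cc := (norm_nonneg _).trans (hCc x hx)
    gcongr <;> first | exact hCc x hx | exact hLθ x hx θ hθ | exact hCL x hx
  · refine .of_forall fun x θ _ => ?_
    simpa [smul_smul] using ((L x).hasFDerivAt.exp).const_mul (c x)

theorem fderiv_integral_mul_exp_apply (hK : IsCompact K) (hμK : ∀ᵐ x ∂μ, x ∈ K) {c : X → ℝ}
    (hc : Continuous c) {L : X → StrongDual ℝ F} (hL : Continuous L) (θ₀ v : F) :
    fderiv ℝ (fun θ => ∫ x, c x * exp (L x θ) ∂μ) θ₀ v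
      = ∫ x, L x v * c x * exp (L x θ₀) ∂μ := by
  have hint : Integrable (fun x => (c x * exp (L x θ₀)) • L x) μ :=
    ((hc.mul (hL.clm_apply continuous_const).rexp).smul hL).integrable_of_ae_mem_isCompact hK hμK
  rw [(hasFDerivAt_integral_mul_exp hK hμK hc hL θ₀).fderiv,
    ContinuousLinearMap.integral_apply hint]
  simp only [smul_apply, smul_eq_mul]
  congr 1 with x
  ring

end ParametricIntegral

namespace EuclideanSpace

variable {ι : Type*} [Fintype ι] [DecidableEq ι] {i j : ι}

noncomputable def rotationGenerator (i j : ι) : EuclideanSpace ℝ ι →L[ℝ] EuclideanSpace ℝ ι :=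
  (proj j).smulRight (single i 1) - (proj i).smulRight (single j 1)

theorem rotationGenerator_apply (x : EuclideanSpace ℝ ι) (k : ι) :
    rotationGenerator i j x k = (if k = i then x j else 0) - (if k = j then x i else 0) := by
  simp [rotationGenerator, PiLp.single_apply]

theorem rotationGenerator_apply_apply_apply (hij : i ≠ j) (x : EuclideanSpace ℝ ι) :
    rotationGenerator i j (rotationGenerator i j (rotationGenerator i j x))
      = -rotationGenerator i j x := by
  ext k
  by_cases hi : k = i <;> by_cases hj : k = j <;> simp_all [rotationGenerator_apply, hij.symm]

/-- Rotation by the angle `φ` in the `(i, j)`-coordinate plane, written by Rodrigues' formula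
`exp (φ J) = 1 + sin φ J + (1 - cos φ) J²` for the generator `J`. -/
noncomputable def planeRotationCLM (i j : ι) (φ : ℝ) :
    EuclideanSpace ℝ ι →L[ℝ] EuclideanSpace ℝ ι :=
  1 + sin φ • rotationGenerator i j
    + (1 - cos φ) • (rotationGenerator i j).comp (rotationGenerator i j)

theorem planeRotationCLM_apply (φ : ℝ) (x : EuclideanSpace ℝ ι) :
    planeRotationCLM i j φ x = x + sin φ • rotationGenerator i j x
        + (1 - cos φ) • rotationGenerator i j (rotationGenerator i j x) := rfl

theorem norm_planeRotationCLM_apply (hij : i ≠ j) (φ : ℝ) (x : EuclideanSpace ℝ ι) :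
    ‖planeRotationCLM i j φ x‖ = ‖x‖ := by
  rw [← sq_eq_sq₀ (norm_nonneg _) (norm_nonneg _), EuclideanSpace.norm_sq_eq,
    EuclideanSpace.norm_sq_eq, ← sub_eq_zero, ← Finset.sum_sub_distrib,
    Fintype.sum_eq_add i j hij]
  · simp only [planeRotationCLM_apply, PiLp.add_apply, PiLp.smul_apply, rotationGenerator_apply,
      ↓reduceIte, hij, hij.symm, sub_zero, zero_sub, smul_eq_mul, mul_neg, Real.norm_eq_abs,
      sq_abs]
    linear_combination (x i ^ 2 + x j ^ 2) * (sin_sq_add_cos_sq φ)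
  · intro k hk
    simp [planeRotationCLM_apply, rotationGenerator_apply, hk.1, hk.2]

noncomputable def planeRotation (hij : i ≠ j) (φ : ℝ) :
    EuclideanSpace ℝ ι ≃ₗᵢ[ℝ] EuclideanSpace ℝ ι :=
  LinearIsometry.toLinearIsometryEquiv
    { toLinearMap := (planeRotationCLM i j φ).toLinearMap
      norm_map' := norm_planeRotationCLM_apply hij φ } rfl

theorem planeRotation_apply (hij : i ≠ j) (φ : ℝ) (x : EuclideanSpace ℝ ι) :
    planeRotation hij φ x = x + sin φ • rotationGenerator i j x
        + (1 - cos φ) • rotationGenerator i j (rotationGenerator i j x) :=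
  planeRotationCLM_apply φ x

theorem planeRotation_zero (hij : i ≠ j) (x : EuclideanSpace ℝ ι) :
    planeRotation hij 0 x = x := by
  simp [planeRotation_apply]

theorem hasDerivAt_planeRotation (hij : i ≠ j) (φ : ℝ) (x : EuclideanSpace ℝ ι) :
    HasDerivAt (fun φ => planeRotation hij φ x)
      (planeRotation hij φ (rotationGenerator i j x)) φ := by
  have h := (((hasDerivAt_sin φ).smul_const (rotationGenerator i j x)).const_add x).add
    (((hasDerivAt_cos φ).const_sub 1).smul_const
      (rotationGenerator i j (rotationGenerator i j x)))
  refine h.congr_deriv ?_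
  rw [planeRotation_apply, rotationGenerator_apply_apply_apply hij, neg_neg]
  module

theorem integral_fderiv_rotationGenerator_eq_zero (hij : i ≠ j)
    {μ : Measure (EuclideanSpace ℝ ι)} [IsFiniteMeasure μ] {r : ℝ} (hμ : ∀ᵐ x ∂μ, ‖x‖ ≤ r)
    (hinv : ∀ T : EuclideanSpace ℝ ι ≃ₗᵢ[ℝ] EuclideanSpace ℝ ι, MeasurePreserving T μ μ)
    {f : EuclideanSpace ℝ ι → ℝ} (hf : ContDiff ℝ 1 f) :
    ∫ x, fderiv ℝ f x (rotationGenerator i j x) ∂μ = 0 := by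
  set J := rotationGenerator i j
  set R := planeRotation hij
  obtain ⟨C, hC⟩ := (isCompact_closedBall (0 : EuclideanSpace ℝ ι) r).exists_bound_of_continuousOn
    (hf.continuous_fderiv one_ne_zero).continuousOn
  have hμ' : ∀ᵐ x ∂μ, x ∈ closedBall 0 r := hμ.mono fun x hx => mem_closedBall_zero_iff.2 hx
  have hconst : (fun φ => ∫ x, f (R φ x) ∂μ) = fun _ => ∫ x, f x ∂μ :=
    funext fun φ => (hinv (R φ)).integral_comp (R φ).toHomeomorph.measurableEmbedding f
  have hbound : ∀ᵐ x ∂μ, ∀ φ ∈ (Set.univ : Set ℝ),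
      ‖fderiv ℝ f (R φ x) (R φ (J x))‖ ≤ C * (‖J‖ * r) := by
    filter_upwards [hμ'] with x hx φ _
    have hRx : R φ x ∈ closedBall 0 r := by simpa using hx
    refine ((fderiv ℝ f (R φ x)).le_opNorm _).trans (mul_le_mul (hC _ hRx) ?_ (norm_nonneg _)
      ((norm_nonneg _).trans (hC _ hRx)))
    rw [LinearIsometryEquiv.norm_map]
    exact (J.le_opNorm x).trans (mul_le_mul_of_nonneg_left (mem_closedBall_zero_iff.1 hx)
      (norm_nonneg _))
  obtain ⟨-, hderiv⟩ := hasDerivAt_integral_of_dominated_loc_of_deriv_le (x₀ := 0)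
    (F := fun φ x => f (R φ x)) Filter.univ_mem
    (.of_forall fun φ => (hf.continuous.comp (R φ).continuous).aestronglyMeasurable)
    ((hf.continuous.comp (R 0).continuous).integrable_of_ae_mem_isCompact
      (isCompact_closedBall 0 r) hμ')
    (((hf.continuous_fderiv one_ne_zero).comp (R 0).continuous).clm_apply
      ((R 0).continuous.comp J.continuous)).aestronglyMeasurable hbound (integrable_const _)
    (.of_forall fun x φ _ => (hf.differentiable one_ne_zero _).hasFDerivAt.comp_hasDerivAt φ
      (hasDerivAt_planeRotation hij φ x))
  rw [hconst] at hderiv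
  simpa [R, planeRotation_zero] using hderiv.unique (hasDerivAt_const (0 : ℝ) _)

end EuclideanSpace

theorem LinearIsometryEquiv.measurePreserving_hausdorffMeasure_restrict_sphere {E : Type*}
    [NormedAddCommGroup E] [NormedSpace ℝ E] [MeasurableSpace E] [BorelSpace E]
    (T : E ≃ₗᵢ[ℝ] E) (d r : ℝ) :
    MeasurePreserving T (μH[d].restrict (sphere 0 r)) (μH[d].restrict (sphere 0 r)) := by
  have hpre : T ⁻¹' sphere 0 r = sphere 0 r := by ext x; simp
  simpa [hpre] using (T.toIsometryEquiv.measurePreserving_hausdorffMeasure d).restrict_preimage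
    (s := sphere 0 r) isClosed_sphere.measurableSet

open EuclideanSpace

section Bingham

variable {ι : Type*} [Fintype ι]

noncomputable def binghamExponent (x : EuclideanSpace ℝ ι) : StrongDual ℝ (ι → ℝ) :=
  ∑ k, x k ^ 2 • ContinuousLinearMap.proj k

@[simp]
theorem binghamExponent_apply (x : EuclideanSpace ℝ ι) (θ : ι → ℝ) :
    binghamExponent x θ = ∑ k, θ k * x k ^ 2 := by
  simp [binghamExponent, mul_comm]

theorem continuous_binghamExponent : Continuous (binghamExponent (ι := ι)) := by
  unfold binghamExponent
  fun_prop

variable [DecidableEq ι] {i j : ι}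

theorem binghamExponent_single (x : EuclideanSpace ℝ ι) (k : ι) :
    binghamExponent x (Pi.single k 1) = x k ^ 2 := by
  simp [Pi.single_apply]

theorem sum_mul_mul_rotationGenerator (hij : i ≠ j) (w : ι → ℝ) (x : EuclideanSpace ℝ ι) :
    ∑ k, w k * x k * rotationGenerator i j x k = (w i - w j) * x i * x j := by
  rw [Fintype.sum_eq_add i j hij fun k hk => by simp [rotationGenerator_apply, hk.1, hk.2]]
  simp only [rotationGenerator_apply, ↓reduceIte, hij, hij.symm, sub_zero, zero_sub, mul_neg]
  ring

theorem fderiv_mul_exp_binghamExponent_rotationGenerator (hij : i ≠ j) (θ : ι → ℝ)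
    (x : EuclideanSpace ℝ ι) :
    fderiv ℝ (fun y : EuclideanSpace ℝ ι => y i * y j * exp (binghamExponent y θ)) x
        (rotationGenerator i j x)
      = (x j ^ 2 - x i ^ 2 + 2 * (θ i - θ j) * x i ^ 2 * x j ^ 2)
        * exp (binghamExponent x θ) := by
  have hc : ∀ k, HasFDerivAt (𝕜 := ℝ) (F := ℝ) (fun y : EuclideanSpace ℝ ι => y k) (proj k) x :=
    fun k => (proj (𝕜 := ℝ) k).hasFDerivAt
  have hB : HasFDerivAt (fun y : EuclideanSpace ℝ ι => binghamExponent y θ)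
      (∑ k, (2 * θ k * x k) • proj (𝕜 := ℝ) k) x := by
    simp only [binghamExponent_apply]
    refine (HasFDerivAt.fun_sum fun k _ => ((hc k).pow 2).const_mul (θ k)).congr_fderiv ?_
    ext v
    simp only [Nat.add_one_sub_one, pow_one, nsmul_eq_mul, Nat.cast_ofNat, sum_apply, smul_apply,
      PiLp.proj_apply, smul_eq_mul]
    ring_nf
  rw [(((hc i).fun_mul (hc j)).fun_mul hB.exp).fderiv]
  simp only [binghamExponent_apply, smul_add, add_apply, smul_apply, sum_apply, PiLp.proj_apply,
    smul_eq_mul, sum_mul_mul_rotationGenerator hij]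
  simp only [rotationGenerator_apply, ↓reduceIte, hij, hij.symm, sub_zero, zero_sub, mul_neg]
  ring

theorem fderiv_integral_mul_exp_binghamExponent_single {μ : Measure (EuclideanSpace ℝ ι)}
    [IsFiniteMeasure μ] {K : Set (EuclideanSpace ℝ ι)} (hK : IsCompact K)
    (hμK : ∀ᵐ x ∂μ, x ∈ K) {c : EuclideanSpace ℝ ι → ℝ} (hc : Continuous c) (θ : ι → ℝ) (k : ι) :
    fderiv ℝ (fun θ => ∫ x, c x * exp (binghamExponent x θ) ∂μ) θ (Pi.single k 1)
      = ∫ x, x k ^ 2 * c x * exp (binghamExponent x θ) ∂μ := by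
  simp only [fderiv_integral_mul_exp_apply hK hμK hc continuous_binghamExponent,
    binghamExponent_single]

theorem integral_sq_mul_sq_mul_exp_binghamExponent {μ : Measure (EuclideanSpace ℝ ι)}
    [IsFiniteMeasure μ] {r : ℝ} (hμ : ∀ᵐ x ∂μ, ‖x‖ ≤ r)
    (hinv : ∀ T : EuclideanSpace ℝ ι ≃ₗᵢ[ℝ] EuclideanSpace ℝ ι, MeasurePreserving T μ μ)
    {θ : ι → ℝ} (hθ : θ i ≠ θ j) :
    ∫ x, x i ^ 2 * x j ^ 2 * exp (binghamExponent x θ) ∂μ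
      = (∫ x, x i ^ 2 * exp (binghamExponent x θ) ∂μ
          - ∫ x, x j ^ 2 * exp (binghamExponent x θ) ∂μ) / (2 * (θ i - θ j)) := by
  have hij : i ≠ j := fun h => hθ (congrArg θ h)
  have hint : ∀ c : EuclideanSpace ℝ ι → ℝ, Continuous c →
      Integrable (fun x => c x * exp (binghamExponent x θ)) μ := fun c hc =>
    (hc.mul (continuous_binghamExponent.clm_apply continuous_const).rexp
      ).integrable_of_ae_mem_isCompact (isCompact_closedBall 0 r)
        (hμ.mono fun x hx => mem_closedBall_zero_iff.2 hx)
  have hf : ContDiff ℝ 1 fun y : EuclideanSpace ℝ ι => y i * y j * exp (binghamExponent y θ) := by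
    simp only [binghamExponent_apply]
    fun_prop
  have hzero := integral_fderiv_rotationGenerator_eq_zero hij hμ hinv hf
  have hsplit : ∀ x : EuclideanSpace ℝ ι,
      (x j ^ 2 - x i ^ 2 + 2 * (θ i - θ j) * x i ^ 2 * x j ^ 2) * exp (binghamExponent x θ)
        = x j ^ 2 * exp (binghamExponent x θ) - x i ^ 2 * exp (binghamExponent x θ)
          + 2 * (θ i - θ j) * (x i ^ 2 * x j ^ 2 * exp (binghamExponent x θ)) := fun x => by ring
  simp only [fderiv_mul_exp_binghamExponent_rotationGenerator hij, hsplit] at hzero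
  rw [integral_add ?_ ?_, integral_sub ?_ ?_, integral_const_mul] at hzero
  · rw [eq_div_iff (mul_ne_zero two_ne_zero (sub_ne_zero.2 hθ))]
    linarith
  · exact hint _ (by fun_prop)
  · exact hint _ (by fun_prop)
  · exact (hint _ (by fun_prop)).sub (hint _ (by fun_prop))
  · exact (hint (fun x => x i ^ 2 * x j ^ 2) (by fun_prop)).const_mul _

end Bingham

theorem bingham_euler_darboux_general (p : ℕ) (i j : Fin p) (θ : Fin p → ℝ) (hθ : θ i ≠ θ j) :
    fderiv ℝ (fun t => fderiv ℝ (binghamC p) t (Pi.single j 1)) θ (Pi.single i 1)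
      = (fderiv ℝ (binghamC p) θ (Pi.single i 1)
          - fderiv ℝ (binghamC p) θ (Pi.single j 1)) / (2 * (θ i - θ j)) := by
  obtain ⟨n, rfl⟩ : ∃ n, p = n + 1 := Nat.exists_eq_succ_of_ne_zero i.pos.ne'
  set μ := μH[((n + 1 : ℕ) : ℝ) - 1].restrict (sphere (0 : EuclideanSpace ℝ (Fin (n + 1))) 1)
  have hμ : ∀ᵐ x ∂μ, x ∈ sphere 0 1 := ae_restrict_mem isClosed_sphere.measurableSet
  have : IsFiniteMeasure μ := ⟨by simpa [μ] using hausdorffMeasure_sphere_lt_top n⟩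
  have hC : binghamC (n + 1) = fun θ => ∫ x, 1 * exp (binghamExponent x θ) ∂μ := by
    ext θ
    have hS : {x : EuclideanSpace ℝ (Fin (n + 1)) | ‖x‖ = 1} = sphere 0 1 := by ext; simp
    simp [binghamC, μ, hS]
  have hpartial : ∀ t k, fderiv ℝ (binghamC (n + 1)) t (Pi.single k 1)
      = ∫ x, x k ^ 2 * exp (binghamExponent x t) ∂μ := by
    intro t k
    rw [hC, fderiv_integral_mul_exp_binghamExponent_single (isCompact_sphere 0 1) hμ
      continuous_const]
    simp
  rw [funext fun t => hpartial t j, hpartial, hpartial,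
    fderiv_integral_mul_exp_binghamExponent_single (isCompact_sphere 0 1) hμ (by fun_prop)]
  exact integral_sq_mul_sq_mul_exp_binghamExponent
    (hμ.mono fun x hx => (mem_sphere_zero_iff_norm.1 hx).le)
    (fun T => T.measurePreserving_hausdorffMeasure_restrict_sphere _ _) hθ

/-- Euler–Darboux equations for the Bingham normalising constant: for `i < j`
and `θ_i ≠ θ_j`, `∂_i ∂_j C = (∂_i C − ∂_j C)/(2(θ_i − θ_j))`. -/
theorem bingham_euler_darboux (p : ℕ) (hp : 2 ≤ p) (i j : Fin p) (hij : i < j)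
    (θ : Fin p → ℝ) (hθ : θ i ≠ θ j) :
    fderiv ℝ (fun t => fderiv ℝ (binghamC p) t (Pi.single j 1)) θ (Pi.single i 1)
      = (fderiv ℝ (binghamC p) θ (Pi.single i 1)
          - fderiv ℝ (binghamC p) θ (Pi.single j 1)) / (2 * (θ i - θ j)) :=
  bingham_euler_darboux_general p i j θ hθ
end

section
/- Let Θ ⊆ ℝ^d be open and ℓ : Θ → ℝ twice continuously differentiable. Suppose θ̄ : [0,1) → Θ is differentiable, the Hessian matrix Hess ℓ(θ̄(τ)) is invertible for all τ ∈ [0,1), and θ̄ solves the continuous Newton–Raphson equation dθ̄/dτ = −(1−τ)^{-1} [Hess ℓ(θ̄(τ))]^{-1} grad ℓ(θ̄(τ)) for 0 ≤ τ < 1. Then grad ℓ(θ̄(τ)) = (1−τ) · grad ℓ(θ̄(0)) for all τ ∈ [0,1); in particular grad ℓ(θ̄(τ)) → 0 as τ → 1. -/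
/-!
Along the flow, the chain rule gives `d/dτ grad ℓ(θ̄) = Hess ℓ(θ̄) θ̄' = -(1-τ)⁻¹ grad ℓ(θ̄)`
(the Hessian being symmetric since `ℓ` is `C²`), so `(1-τ)⁻¹ grad ℓ(θ̄(τ))` has zero derivative
on `[0,1)` and is therefore constant.
-/

open Filter Topology
open scoped Matrix

section

variable {ι : Type*} [Fintype ι] [DecidableEq ι]

theorem Matrix.mulVec_eq_apply_of_eq_apply_single (B : (ι → ℝ) →L[ℝ] (ι → ℝ) →L[ℝ] ℝ)
    (H : Matrix ι ι ℝ) (hH : ∀ i j, H i j = B (Pi.single i 1) (Pi.single j 1)) (v : ι → ℝ) :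
    H *ᵥ v = fun i => B (Pi.single i 1) v := by
  have hH' : H = LinearMap.toMatrix'
      (LinearMap.pi fun i => (B (Pi.single i 1) : (ι → ℝ) →ₗ[ℝ] ℝ)) := by
    ext i j
    simp [hH]
  rw [hH', LinearMap.toMatrix'_mulVec]
  rfl

theorem hasFDerivAt_gradient {ℓ : (ι → ℝ) → ℝ} {x : ι → ℝ} (hℓ : ContDiffAt ℝ 2 ℓ x)
    {H : Matrix ι ι ℝ}
    (hH : ∀ i j, H i j = fderiv ℝ (fun u => fderiv ℝ ℓ u (Pi.single j 1)) x (Pi.single i 1)) :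
    HasFDerivAt (fun t i => fderiv ℝ ℓ t (Pi.single i 1))
      (Matrix.toLin' H).toContinuousLinearMap x := by
  have hD2 : HasFDerivAt (fderiv ℝ ℓ) (fderiv ℝ (fderiv ℝ ℓ) x) x :=
    ((hℓ.fderiv_right one_add_one_eq_two.le).differentiableAt one_ne_zero).hasFDerivAt
  have hpartial : ∀ j, HasFDerivAt (fun u => fderiv ℝ ℓ u (Pi.single j 1))
      ((ContinuousLinearMap.apply ℝ ℝ (Pi.single j 1 : ι → ℝ)).comp (fderiv ℝ (fderiv ℝ ℓ) x)) x :=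
    fun j => (ContinuousLinearMap.apply ℝ ℝ (Pi.single j 1 : ι → ℝ)).hasFDerivAt.comp x hD2
  have hmulVec := Matrix.mulVec_eq_apply_of_eq_apply_single (fderiv ℝ (fderiv ℝ ℓ) x) H
    fun i j => by rw [hH, (hpartial j).fderiv]; rfl
  refine (hasFDerivAt_pi.2 hpartial).congr_fderiv ?_
  ext1 v
  simp only [LinearMap.coe_toContinuousLinearMap', Matrix.toLin'_apply, hmulVec]
  ext j
  -- `H i j` differentiates in direction `i` last, so `H` is the transpose of the Jacobian of the
  -- gradient; Schwarz's theorem identifies the two.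
  exact hℓ.isSymmSndFDerivAt (by simp) _ _

end

theorem eq_one_sub_smul_of_hasDerivAt {E : Type*} [NormedAddCommGroup E] [NormedSpace ℝ E]
    {g : ℝ → E} (hg : ∀ τ ∈ Set.Ico (0 : ℝ) 1, HasDerivAt g (-(1 - τ)⁻¹ • g τ) τ) :
    ∀ τ ∈ Set.Ico (0 : ℝ) 1, g τ = (1 - τ) • g 0 := by
  have hF : ∀ τ ∈ Set.Ico (0 : ℝ) 1, HasDerivAt (fun u => (1 - u)⁻¹ • g u) 0 τ := by
    intro τ hτ
    have hne : (1 : ℝ) - τ ≠ 0 := sub_ne_zero.2 hτ.2.ne'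
    have hinv : HasDerivAt (fun u : ℝ => (1 - u)⁻¹) ((1 - τ)⁻¹ ^ 2) τ := by
      refine (((hasDerivAt_id' τ).const_sub 1).inv hne).congr_deriv ?_
      simp [inv_pow]
    refine (hinv.smul (hg τ hτ)).congr_deriv ?_
    simp [smul_smul, sq]
  intro τ hτ
  have hconst := constant_of_has_deriv_right_zero (f := fun u => (1 - u)⁻¹ • g u)
    (fun s hs => (hF s ⟨hs.1, hs.2.trans_lt hτ.2⟩).continuousAt.continuousWithinAt)
    (fun s hs => (hF s ⟨hs.1, hs.2.trans hτ.2⟩).hasDerivWithinAt) τ ⟨hτ.1, le_rfl⟩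
  have hne : (1 : ℝ) - τ ≠ 0 := sub_ne_zero.2 hτ.2.ne'
  simp only [sub_zero, inv_one, one_smul] at hconst
  rw [← hconst, smul_smul, mul_inv_cancel₀ hne, one_smul]

/-- The continuous-time Newton–Raphson flow
`dθ̄/dτ = −(1−τ)⁻¹ [Hess ℓ(θ̄)]⁻¹ grad ℓ(θ̄)` satisfies
`grad ℓ(θ̄(τ)) = (1−τ) grad ℓ(θ̄(0))` on `[0,1)`; in particular
`grad ℓ(θ̄(τ)) → 0` as `τ → 1`. -/
theorem continuous_newton_raphson (d : ℕ) (Θ : Set (Fin d → ℝ)) (hΘ : IsOpen Θ)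
    (ℓ : (Fin d → ℝ) → ℝ) (hℓ : ContDiffOn ℝ 2 ℓ Θ)
    (gradℓ : (Fin d → ℝ) → (Fin d → ℝ))
    (Hessℓ : (Fin d → ℝ) → Matrix (Fin d) (Fin d) ℝ)
    (hgrad : ∀ t i, gradℓ t i = fderiv ℝ ℓ t (Pi.single i 1))
    (hHess : ∀ t i j, Hessℓ t i j
      = fderiv ℝ (fun u => fderiv ℝ ℓ u (Pi.single j 1)) t (Pi.single i 1))
    (θbar : ℝ → (Fin d → ℝ)) (θ' : ℝ → (Fin d → ℝ))
    (hmap : ∀ τ ∈ Set.Ico (0 : ℝ) 1, θbar τ ∈ Θ)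
    (hcurve : ∀ τ ∈ Set.Ico (0 : ℝ) 1, HasDerivAt θbar (θ' τ) τ)
    (hinv : ∀ τ ∈ Set.Ico (0 : ℝ) 1, IsUnit (Hessℓ (θbar τ)))
    (hode : ∀ τ ∈ Set.Ico (0 : ℝ) 1,
      θ' τ = -(1 - τ)⁻¹ • (Hessℓ (θbar τ))⁻¹.mulVec (gradℓ (θbar τ))) :
    (∀ τ ∈ Set.Ico (0 : ℝ) 1, gradℓ (θbar τ) = (1 - τ) • gradℓ (θbar 0))
    ∧ Filter.Tendsto (fun τ => gradℓ (θbar τ))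
        (nhdsWithin 1 (Set.Iio 1)) (nhds 0) := by
  obtain rfl : gradℓ = fun t i => fderiv ℝ ℓ t (Pi.single i 1) := funext fun t => funext (hgrad t)
  have hflow : ∀ τ ∈ Set.Ico (0 : ℝ) 1,
      HasDerivAt (fun s i => fderiv ℝ ℓ (θbar s) (Pi.single i 1))
        (-(1 - τ)⁻¹ • fun i => fderiv ℝ ℓ (θbar τ) (Pi.single i 1)) τ := by
    intro τ hτ
    have hH := hasFDerivAt_gradient (hℓ.contDiffAt (hΘ.mem_nhds (hmap τ hτ))) (hHess (θbar τ))
    refine (hH.comp_hasDerivAt τ (hcurve τ hτ)).congr_deriv ?_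
    rw [LinearMap.coe_toContinuousLinearMap', Matrix.toLin'_apply, hode τ hτ, Matrix.mulVec_smul,
      Matrix.mulVec_mulVec,
      Matrix.mul_nonsing_inv _ ((Matrix.isUnit_iff_isUnit_det _).1 (hinv τ hτ)), Matrix.one_mulVec]
  have hgrad_eq := eq_one_sub_smul_of_hasDerivAt hflow
  refine ⟨hgrad_eq, ?_⟩
  have hlim : Tendsto (fun τ : ℝ => (1 - τ) • fun i => fderiv ℝ ℓ (θbar 0) (Pi.single i 1))
      (𝓝 1) (𝓝 0) :=
    ((continuous_const.sub continuous_id).smul continuous_const).tendsto' 1 0 (by simp)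
  exact (hlim.mono_left nhdsWithin_le_nhds).congr'
    (eventually_of_mem (Ico_mem_nhdsLT zero_lt_one) fun τ hτ => (hgrad_eq τ hτ).symm)
end

section
/- Let C(θ) be the Bingham normalising constant and s ∈ ℝ^p with all s_i > 0, and define ℓ(θ) = ∑_{i=1}^p θ_i s_i − log C(θ). Suppose θ̂ ∈ ℝ^p is a maximum likelihood estimate which is unique up to the redundancy, i.e. every maximizer of ℓ equals θ̂ + c·1_p for some c ∈ ℝ, and θ̂ satisfies the likelihood equations ∂ log C/∂θ_i (θ̂) = s_i for all i. Then for all indices i, j: if s_i < s_j then θ̂_i < θ̂_j, and if s_i = s_j then θ̂_i = θ̂_j. In particular, if s = (σ_1,…,σ_1,…,σ_q,…,σ_q) with σ_1 < ⋯ < σ_q and σ_i occurring d_i times, then θ̂ = (φ̂_1,…,φ̂_1,…,φ̂_q,…,φ̂_q) with φ̂_1 < ⋯ < φ̂_q and the same multiplicities. -/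
/-!
Permuting coordinates is an isometry of the sphere, so `C(θ ∘ σ) = C(θ)` for every permutation `σ`.
Swapping `θ̂_i` and `θ̂_j` therefore changes the log-likelihood by exactly `-(θ̂_i - θ̂_j)(s_i - s_j)`.
Maximality of `θ̂` forces `θ̂_i ≤ θ̂_j` when `s_i < s_j`; when `s_i = s_j` the swapped vector is another
maximiser, hence a shift `θ̂ + c·1_p`, and comparing coordinates `i` and `j` gives `c = 0`.
Finally, if `θ̂_i = θ̂_j` with `s_i < s_j`, the swap fixes `θ̂`, so the symmetry of `log C` makes its
`i`-th and `j`-th partial derivatives at `θ̂` agree, contradicting the likelihood equations.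
-/

open MeasureTheory

theorem setIntegral_comp_isometryEquiv_hausdorffMeasure {X E : Type*} [EMetricSpace X]
    [MeasurableSpace X] [BorelSpace X] [NormedAddCommGroup E] [NormedSpace ℝ E]
    (e : X ≃ᵢ X) {s : Set X} (hs : e ⁻¹' s = s) (d : ℝ) (g : X → E) :
    ∫ x in s, g (e x) ∂μH[d] = ∫ x in s, g x ∂μH[d] := by
  simpa only [hs] using (e.measurePreserving_hausdorffMeasure d).setIntegral_preimage_emb
    e.toHomeomorph.measurableEmbedding g s

theorem binghamC_comp_perm (p : ℕ) (σ : Equiv.Perm (Fin p)) (θ : Fin p → ℝ) :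
    binghamC p (θ ∘ σ) = binghamC p θ := by
  set e := LinearIsometryEquiv.piLpCongrLeft 2 ℝ ℝ σ
  have hsphere : e ⁻¹' {x | ‖x‖ = 1} = {x | ‖x‖ = 1} := by
    ext x
    simp only [Set.mem_preimage, Set.mem_ofPred_eq, LinearIsometryEquiv.norm_map]
  have hintegrand : ∀ x : EuclideanSpace ℝ (Fin p),
      ∑ k, (θ ∘ σ) k * x k ^ 2 = ∑ k, θ k * e x k ^ 2 := fun x => by
    rw [← Equiv.sum_comp σ (fun k => θ k * e x k ^ 2)]
    simp [e]
  simp only [binghamC, hintegrand]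
  exact setIntegral_comp_isometryEquiv_hausdorffMeasure e.toIsometryEquiv hsphere _
    (fun y => Real.exp (∑ k, θ k * y k ^ 2))

theorem comp_swap_eq_self_of_apply_eq {α β : Type*} [DecidableEq α] {f : α → β} {i j : α}
    (h : f i = f j) : f ∘ Equiv.swap i j = f := by
  rw [Equiv.comp_swap_eq_update, h, Function.update_eq_self, ← h, Function.update_eq_self]

theorem sum_comp_swap_mul {ι : Type*} [Fintype ι] [DecidableEq ι] (θ s : ι → ℝ) (i j : ι) :
    ∑ k, θ (Equiv.swap i j k) * s k = ∑ k, θ k * s k - (θ i - θ j) * (s i - s j) := by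
  rcases eq_or_ne i j with rfl | hij
  · simp
  have hoff : ∀ k, k ≠ i ∧ k ≠ j → θ (Equiv.swap i j k) * s k - θ k * s k = 0 := by
    rintro k ⟨hki, hkj⟩
    rw [Equiv.swap_apply_of_ne_of_ne hki hkj, sub_self]
  have hdiff := Fintype.sum_eq_add i j hij hoff
  rw [Finset.sum_sub_distrib, Equiv.swap_apply_left, Equiv.swap_apply_right] at hdiff
  linarith

theorem fderiv_apply_single_perm_of_comp_perm_eq {𝕜 ι F : Type*} [NontriviallyNormedField 𝕜]
    [CompleteSpace 𝕜] [Fintype ι] [DecidableEq ι] [NormedAddCommGroup F] [NormedSpace 𝕜 F]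
    {f : (ι → 𝕜) → F} (σ : Equiv.Perm ι) (hf : ∀ θ, f (θ ∘ σ) = f θ) {θ : ι → 𝕜}
    (hθ : θ ∘ σ = θ) (i : ι) (x : 𝕜) :
    fderiv 𝕜 f θ (Pi.single (σ i) x) = fderiv 𝕜 f θ (Pi.single i x) := by
  set E := (LinearEquiv.funCongrLeft 𝕜 𝕜 σ).toContinuousLinearEquiv
  have hfE : f ∘ E = f := funext hf
  have hchain := E.comp_right_fderiv (f := f) (x := θ)
  rw [hfE] at hchain
  have hEθ : E θ = θ := hθ
  have hEsingle : E (Pi.single (σ i) x) = Pi.single i x := by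
    change Pi.single (σ i) x ∘ σ = _
    rw [Pi.single_comp_equiv, Equiv.symm_apply_apply]
  conv_lhs => rw [hchain]
  rw [ContinuousLinearMap.comp_apply, ContinuousLinearEquiv.coe_coe, hEθ, hEsingle]

section PermInvariantLogPartition

variable {ι : Type*} [Fintype ι]

def logLik (A : (ι → ℝ) → ℝ) (s θ : ι → ℝ) : ℝ :=
  ∑ k, θ k * s k - A θ

variable [DecidableEq ι] {A : (ι → ℝ) → ℝ} {s θ : ι → ℝ} {i j : ι}

theorem logLik_comp_swap (hA : ∀ (σ : Equiv.Perm ι) θ, A (θ ∘ σ) = A θ) (θ : ι → ℝ) (i j : ι) :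
    logLik A s (θ ∘ Equiv.swap i j) = logLik A s θ - (θ i - θ j) * (s i - s j) := by
  simp only [logLik, hA, Function.comp_apply, sum_comp_swap_mul]
  ring

theorem le_of_lt_of_forall_logLik_le (hA : ∀ (σ : Equiv.Perm ι) θ, A (θ ∘ σ) = A θ)
    (hmax : ∀ t, logLik A s t ≤ logLik A s θ) (h : s i < s j) : θ i ≤ θ j := by
  have hswap := hmax (θ ∘ Equiv.swap i j)
  rw [logLik_comp_swap hA] at hswap
  nlinarith

theorem eq_of_eq_of_forall_logLik_le (hA : ∀ (σ : Equiv.Perm ι) θ, A (θ ∘ σ) = A θ)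
    (hmax : ∀ t, logLik A s t ≤ logLik A s θ)
    (huniq : ∀ t, (∀ u, logLik A s u ≤ logLik A s t) → ∃ c : ℝ, t = fun k => θ k + c)
    (h : s i = s j) : θ i = θ j := by
  have hswap_max : ∀ u, logLik A s u ≤ logLik A s (θ ∘ Equiv.swap i j) := by
    simpa only [logLik_comp_swap hA, h, sub_self, mul_zero, sub_zero] using hmax
  obtain ⟨c, hc⟩ := huniq _ hswap_max
  have hci := congrFun hc i
  have hcj := congrFun hc j
  simp only [Function.comp_apply, Equiv.swap_apply_left, Equiv.swap_apply_right] at hci hcj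
  linarith

theorem eq_of_eq_of_fderiv_apply_single_eq (hA : ∀ (σ : Equiv.Perm ι) θ, A (θ ∘ σ) = A θ)
    (hlik : ∀ i, fderiv ℝ A θ (Pi.single i 1) = s i) (h : θ i = θ j) : s i = s j := by
  rw [← hlik i, ← hlik j, ← Equiv.swap_apply_left i j]
  exact (fderiv_apply_single_perm_of_comp_perm_eq _ (hA _) (comp_swap_eq_self_of_apply_eq h) i 1).symm

end PermInvariantLogPartition

theorem bingham_mle_order_general (p : ℕ)
    (s : Fin p → ℝ)
    (ℓ : (Fin p → ℝ) → ℝ)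
    (hℓ : ∀ θ, ℓ θ = (∑ i, θ i * s i) - Real.log (binghamC p θ))
    (θhat : Fin p → ℝ)
    (hmax : ∀ θ, ℓ θ ≤ ℓ θhat)
    (huniq : ∀ θ, (∀ t, ℓ t ≤ ℓ θ) → ∃ c : ℝ, θ = fun i => θhat i + c)
    (hlik : ∀ i, fderiv ℝ (fun t => Real.log (binghamC p t)) θhat (Pi.single i 1)
      = s i) :
    ∀ i j : Fin p,
      (s i < s j → θhat i < θhat j) ∧ (s i = s j → θhat i = θhat j) := by
  have hA : ∀ (σ : Equiv.Perm (Fin p)) θ,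
      Real.log (binghamC p (θ ∘ σ)) = Real.log (binghamC p θ) := fun σ θ => by
    rw [binghamC_comp_perm]
  obtain rfl : ℓ = logLik (fun t => Real.log (binghamC p t)) s := funext hℓ
  intro i j
  refine ⟨fun hlt => ?_, eq_of_eq_of_forall_logLik_le hA hmax huniq⟩
  exact (le_of_lt_of_forall_logLik_le hA hmax hlt).lt_of_ne
    fun hθ => hlt.ne (eq_of_eq_of_fderiv_apply_single_eq hA hlik hθ)

/-- Order preservation of the Bingham MLE (Lemma 3 of the paper): if all
sufficient statistics `s_i` are positive, `θ̂` maximises the log-likelihood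
`ℓ(θ) = ∑ θ_i s_i − log C(θ)`, every maximiser equals `θ̂ + c·1_p` for some
`c`, and `θ̂` solves the likelihood equations `∂_i log C(θ̂) = s_i`, then
`s_i < s_j` implies `θ̂_i < θ̂_j` and `s_i = s_j` implies `θ̂_i = θ̂_j`
(so `θ̂` has exactly the same ordering and multiplicities as `s`). -/
theorem bingham_mle_order (p : ℕ) (hp : 2 ≤ p)
    (s : Fin p → ℝ) (hs : ∀ i, 0 < s i)
    (ℓ : (Fin p → ℝ) → ℝ)
    (hℓ : ∀ θ, ℓ θ = (∑ i, θ i * s i) - Real.log (binghamC p θ))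
    (θhat : Fin p → ℝ)
    (hmax : ∀ θ, ℓ θ ≤ ℓ θhat)
    (huniq : ∀ θ, (∀ t, ℓ t ≤ ℓ θ) → ∃ c : ℝ, θ = fun i => θhat i + c)
    (hlik : ∀ i, fderiv ℝ (fun t => Real.log (binghamC p t)) θhat (Pi.single i 1)
      = s i) :
    ∀ i j : Fin p,
      (s i < s j → θhat i < θhat j) ∧ (s i = s j → θhat i = θhat j) :=
  bingham_mle_order_general p s ℓ hℓ θhat hmax huniq hlik
end

section
/- For any real numbers a_1,…,a_q > 0 and any natural numbers k_1,…,k_q, the Gamma-function ratio satisfies (∏_{i=1}^q Γ(k_i + a_i)) / Γ(∑_{i=1}^q (k_i + a_i)) ≤ (∏_{i=1}^q Γ(a_i)) / Γ(∑_{i=1}^q a_i); equivalently, the coefficient (∏_i Γ(k_i + a_i) / Γ(∑_i (k_i + a_i))) · (Γ(∑_i a_i) / ∏_i Γ(a_i)) is at most 1. -/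
/-!
The ratio is the multivariate Beta function `B(x) = ∏ Γ(xᵢ) / Γ(∑ xᵢ)` evaluated at `k + a` and
at `a`. By `Γ(y + 1) = y Γ(y)`, raising one coordinate `xᵢ` by one multiplies `B(x)` by
`xᵢ / ∑ xⱼ ≤ 1`, so `B` can only decrease as the coordinates are raised one unit at a time from
`a` to `k + a`.
-/

open Real Finset

noncomputable def multiBeta {ι : Type*} [Fintype ι] (x : ι → ℝ) : ℝ :=
  (∏ i, Gamma (x i)) / Gamma (∑ i, x i)

namespace multiBeta

variable {ι : Type*} [Fintype ι] {x : ι → ℝ}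

theorem nonneg (hx : ∀ i, 0 < x i) : 0 ≤ multiBeta x :=
  div_nonneg (prod_nonneg fun i _ => (Gamma_pos_of_pos (hx i)).le)
    (Gamma_nonneg_of_nonneg (sum_nonneg fun i _ => (hx i).le))

variable [DecidableEq ι]

theorem add_single_one (hx : ∀ i, 0 < x i) (i : ι) :
    multiBeta (x + Pi.single i 1) = x i / (∑ j, x j) * multiBeta x := by
  have hΓ : ∀ j, Gamma ((x + Pi.single i 1 : ι → ℝ) j)
      = (Pi.mulSingle i (x i) : ι → ℝ) j * Gamma (x j) := by
    intro j
    rcases eq_or_ne j i with rfl | hj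
    · simp [Gamma_add_one (hx j).ne']
    · simp [hj]
  have hsum : ∑ j, (x + Pi.single i 1 : ι → ℝ) j = (∑ j, x j) + 1 := by
    simp [sum_add_distrib]
  have hS : 0 < ∑ j, x j := sum_pos (fun j _ => hx j) ⟨i, mem_univ i⟩
  rw [multiBeta, multiBeta, hsum, Gamma_add_one hS.ne']
  simp only [hΓ, prod_mul_distrib, prod_pi_mulSingle', mem_univ, if_true]
  rw [mul_div_mul_comm]

theorem add_single_one_le (hx : ∀ i, 0 < x i) (i : ι) :
    multiBeta (x + Pi.single i 1) ≤ multiBeta x := by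
  rw [add_single_one hx i]
  refine mul_le_of_le_one_left (nonneg hx) ((div_le_one ?_).mpr ?_)
  · exact sum_pos (fun j _ => hx j) ⟨i, mem_univ i⟩
  · exact single_le_sum (fun j _ => (hx j).le) (mem_univ i)

theorem add_single_natCast_le (hx : ∀ i, 0 < x i) (i : ι) (n : ℕ) :
    multiBeta (x + Pi.single i (n : ℝ)) ≤ multiBeta x := by
  induction n with
  | zero => simp
  | succ n ih =>
    have hpos : ∀ j, 0 < (x + Pi.single i (n : ℝ) : ι → ℝ) j := fun j => by
      rcases eq_or_ne j i with rfl | hj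
      · simpa using add_pos_of_pos_of_nonneg (hx j) n.cast_nonneg
      · simpa [hj] using hx j
    rw [Nat.cast_succ, Pi.single_add, ← add_assoc]
    exact (add_single_one_le hpos i).trans ih

theorem natCast_add_le (hx : ∀ i, 0 < x i) (k : ι → ℕ) :
    multiBeta (fun i => (k i : ℝ) + x i) ≤ multiBeta x := by
  suffices h : ∀ s : Finset ι, multiBeta (x + ∑ i ∈ s, Pi.single i (k i : ℝ)) ≤ multiBeta x by
    convert h univ using 2
    rw [univ_sum_single, add_comm]
    rfl
  intro s
  induction s using Finset.induction_on with
  | empty => simp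
  | insert i s hi ih =>
    have hpos : ∀ j, 0 < (x + ∑ i ∈ s, Pi.single i (k i : ℝ) : ι → ℝ) j := fun j => by
      rw [Pi.add_apply, Finset.sum_apply]
      exact add_pos_of_pos_of_nonneg (hx j) (sum_nonneg fun i _ => by
        rcases eq_or_ne j i with rfl | hj <;> simp [*])
    rw [sum_insert hi, add_left_comm, add_comm]
    exact (add_single_natCast_le hpos i (k i)).trans ih

end multiBeta

/-- Gamma-function ratio inequality: for `a_1,…,a_q > 0` and natural numbers
`k_1,…,k_q`,
`(∏_i Γ(k_i + a_i))/Γ(∑_i (k_i + a_i)) ≤ (∏_i Γ(a_i))/Γ(∑_i a_i)`. -/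
theorem gamma_ratio_le (q : ℕ) (a : Fin q → ℝ) (ha : ∀ i, 0 < a i)
    (k : Fin q → ℕ) :
    (∏ i, Real.Gamma ((k i : ℝ) + a i)) / Real.Gamma (∑ i, ((k i : ℝ) + a i))
      ≤ (∏ i, Real.Gamma (a i)) / Real.Gamma (∑ i, a i) :=
  multiBeta.natCast_add_le ha k
end
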